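/- Let A and B be groups with a common subgroup C such that B = C ⋉ N is an (internal) semidirect product of C with a normal subgroup N of B. Then the amalgamated free product A *_C B is isomorphic to the semidirect product A ⋉ K, where K is the normal closure of N in A *_C B. Moreover K ∩ B = N. -/

import Mathlib

universe u

/-- The two-element family of groups used to form the amalgam `A *_C B`
as an indexed pushout over `Bool`. -/
def AmalgamFam (A B : Type u) : Bool → Type u
  | false => A
  | true => B

instance (A B : Type u) [Group A] [Group B] : ∀ b, Group (AmalgamFam A B b)
  | false => ‹Group A›
  | true => ‹Group B›

/-- The pair of inclusions `C → A`, `C → B` as a family indexed by `Bool`. -/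
def amalgamHom {A B : Type u} {C : Type*} [Group A] [Group B] [Group C]
    (f₁ : C →* A) (f₂ : C →* B) : ∀ b, C →* AmalgamFam A B b
  | false => f₁
  | true => f₂


/-!
Since `B = f₂(C) ⋉ N`, the quotient map `B → B ⧸ N ≅ C` is a retraction `π : B → C` with kernel
`N`. Gluing `f₁ ∘ π` with the identity of `A` gives a retraction `r : A *_C B → A` of the inclusion
of `A`, and a split retraction exhibits a group as the semidirect product of its kernel with the
image of the section. The kernel of `r` is `K`: it contains `K`, and `K` together with `A`
generates the amalgam because every `b ∈ B` equals `f₂(π b) · n` with `n ∈ N`, where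
`f₂(π b) = f₁(π b)` already lies in `A`. The same decomposition shows that an element of `B` in
`ker r` equals its `N`-component in the amalgam.
-/

namespace MonoidHom

variable {G A : Type*} [Group G] [Group A] {r : G →* A} {s : A →* G}

theorem isComplement'_ker_range_of_leftInverse (hrs : Function.LeftInverse r s) :
    r.ker.IsComplement' s.range := by
  refine Subgroup.isComplement'_of_disjoint_and_mul_eq_univ ?_ ?_
  · rw [Subgroup.disjoint_def]
    rintro _ hx ⟨a, rfl⟩
    rw [mem_ker, hrs a] at hx
    rw [hx, map_one]
  · refine Set.eq_univ_of_forall fun g => ⟨g * s (r g)⁻¹, ?_, s (r g), ⟨r g, rfl⟩, by simp⟩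
    simp [mem_ker, hrs (r g)]

theorem exists_mulEquiv_semidirectProduct_of_leftInverse (hrs : Function.LeftInverse r s) :
    ∃ φ : A →* MulAut r.ker, Nonempty (G ≃* r.ker ⋊[φ] A) :=
  ⟨_, ⟨(SemidirectProduct.mulEquivSubgroup (isComplement'_ker_range_of_leftInverse hrs)).symm.trans
    (SemidirectProduct.congr' (MulEquiv.refl _) (MonoidHom.ofInjective hrs.injective).symm)⟩⟩

theorem ker_eq_of_le_of_sup_range_eq_top (hrs : Function.LeftInverse r s) {K : Subgroup G}
    [K.Normal] (hK : K ≤ r.ker) (htop : K ⊔ s.range = ⊤) : r.ker = K := by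
  refine le_antisymm (fun g hg => ?_) hK
  obtain ⟨k, hk, _, ⟨a, rfl⟩, rfl⟩ :=
    Subgroup.mem_sup_of_normal_left.mp (htop ▸ Subgroup.mem_top g)
  rw [mem_ker, map_mul, hK hk, one_mul, hrs a] at hg
  simpa [hg] using hk

end MonoidHom

namespace Subgroup

variable {G C : Type*} [Group G] [Group C] {f : C →* G} {N : Subgroup G} [N.Normal]

noncomputable def IsComplement'.retraction (hf : Function.Injective f)
    (h : f.range.IsComplement' N) : G →* C :=
  (MonoidHom.ofInjective hf).symm.toMonoidHom.comp
    (h.QuotientMulEquiv.toMonoidHom.comp (QuotientGroup.mk' N))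

theorem IsComplement'.retraction_apply (hf : Function.Injective f)
    (h : f.range.IsComplement' N) (c : C) :
    h.retraction hf (f c) = c := by
  have : h.QuotientMulEquiv (f c : G ⧸ N) = ⟨f c, c, rfl⟩ :=
    h.QuotientMulEquiv.eq_symm_apply.mp rfl
  simp only [retraction, MonoidHom.comp_apply, QuotientGroup.mk'_apply, MulEquiv.coe_toMonoidHom,
    this]
  exact (MonoidHom.ofInjective hf).symm_apply_eq.mpr rfl

theorem IsComplement'.ker_retraction (hf : Function.Injective f) (h : f.range.IsComplement' N) :
    (h.retraction hf).ker = N := by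
  ext g
  simp [retraction]

end Subgroup

open Monoid

section Amalgam

variable {A B : Type u} {C : Type*} [Group A] [Group B] [Group C] (f₁ : C →* A) {f₂ : C →* B}
  {π : B →* C} (hπ : Function.LeftInverse π f₂)

theorem of_true_apply_eq_of_false (c : C) :
    PushoutI.of (φ := amalgamHom f₁ f₂) true (f₂ c) = PushoutI.of false (f₁ c) :=
  (PushoutI.of_apply_eq_base (amalgamHom f₁ f₂) true c).trans
    (PushoutI.of_apply_eq_base (amalgamHom f₁ f₂) false c).symm

include hπ in
theorem exists_mem_ker_of_true_eq (b : B) : ∃ n ∈ π.ker,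
    PushoutI.of (φ := amalgamHom f₁ f₂) true b =
      PushoutI.of false (f₁ (π b)) * PushoutI.of true n :=
  ⟨(f₂ (π b))⁻¹ * b, by simp [hπ (π b)], by
    rw [← of_true_apply_eq_of_false]
    exact (congrArg _ (mul_inv_cancel_left _ _).symm).trans (map_mul _ _ _)⟩

noncomputable def amalgamRetraction : PushoutI (amalgamHom f₁ f₂) →* A :=
  PushoutI.lift (fun i => match i with
      | false => MonoidHom.id A
      | true => f₁.comp π) f₁
    (fun i => match i with
      | false => rfl
      | true => by ext c; exact congrArg f₁ (hπ c))

theorem amalgamRetraction_of_false (a : A) :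
    amalgamRetraction f₁ hπ (PushoutI.of false a) = a :=
  PushoutI.lift_of _ _ _ _

theorem amalgamRetraction_of_true (b : B) :
    amalgamRetraction f₁ hπ (PushoutI.of true b) = f₁ (π b) :=
  PushoutI.lift_of _ _ _ _

theorem of_true_mem_ker_amalgamRetraction {n : B} (hn : n ∈ π.ker) :
    PushoutI.of (φ := amalgamHom f₁ f₂) true n ∈ (amalgamRetraction f₁ hπ).ker :=
  (amalgamRetraction_of_true f₁ hπ n).trans ((congrArg f₁ hn).trans f₁.map_one)

theorem ker_amalgamRetraction : (amalgamRetraction f₁ hπ).ker =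
    Subgroup.normalClosure (PushoutI.of (φ := amalgamHom f₁ f₂) true '' (π.ker : Set B)) := by
  set K := Subgroup.normalClosure (PushoutI.of (φ := amalgamHom f₁ f₂) true '' (π.ker : Set B))
  have hNK : ∀ n ∈ π.ker, PushoutI.of (φ := amalgamHom f₁ f₂) true n ∈ K :=
    fun n hn => Subgroup.subset_normalClosure ⟨n, hn, rfl⟩
  refine MonoidHom.ker_eq_of_le_of_sup_range_eq_top (amalgamRetraction_of_false f₁ hπ) ?_ ?_
  · refine Subgroup.normalClosure_le_normal ?_
    rintro _ ⟨n, hn, rfl⟩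
    exact of_true_mem_ker_amalgamRetraction f₁ hπ hn
  · refine eq_top_iff.mpr ?_
    rintro g -
    induction g using PushoutI.induction_on with
    | of i x =>
      cases i with
      | false => exact Subgroup.mem_sup_right ⟨x, rfl⟩
      | true =>
        obtain ⟨n, hn, hx⟩ := exists_mem_ker_of_true_eq f₁ hπ x
        rw [hx]
        exact mul_mem (Subgroup.mem_sup_right ⟨_, rfl⟩) (Subgroup.mem_sup_left (hNK n hn))
    | base c =>
      rw [← PushoutI.of_apply_eq_base _ false c]
      exact Subgroup.mem_sup_right ⟨_, rfl⟩
    | mul x y hx hy => exact mul_mem hx hy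

theorem ker_amalgamRetraction_inf_range_of_true :
    (amalgamRetraction f₁ hπ).ker ⊓ (PushoutI.of (φ := amalgamHom f₁ f₂) true).range =
      π.ker.map (PushoutI.of (φ := amalgamHom f₁ f₂) true) := by
  refine le_antisymm ?_ ?_
  · rintro _ ⟨hb, b, rfl⟩
    obtain ⟨n, hn, hb'⟩ := exists_mem_ker_of_true_eq f₁ hπ b
    have hπb : f₁ (π b) = 1 := (amalgamRetraction_of_true f₁ hπ b).symm.trans hb
    refine ⟨n, hn, ?_⟩
    rw [hb', hπb]
    exact ((congrArg (· * _) (map_one _)).trans (one_mul _)).symm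
  · rintro _ ⟨n, hn, rfl⟩
    exact ⟨of_true_mem_ker_amalgamRetraction f₁ hπ hn, n, rfl⟩

end Amalgam

theorem stmt_3_general (A B : Type u) (C : Type*) [Group A] [Group B] [Group C]
    (f₁ : C →* A) (f₂ : C →* B)
    (hf₂ : Function.Injective f₂)
    (N : Subgroup B) (hN : N.Normal)
    (hsemi : Subgroup.IsComplement' f₂.range N)
    (K : Subgroup (Monoid.PushoutI (amalgamHom f₁ f₂)))
    (hK : K = Subgroup.normalClosure
        ((Monoid.PushoutI.of (φ := amalgamHom f₁ f₂) true) '' (N : Set B))) :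
    K.Normal ∧
    Subgroup.IsComplement' K ((Monoid.PushoutI.of (φ := amalgamHom f₁ f₂) false).range) ∧
    (∃ act : A →* MulAut ↥K,
        Nonempty (Monoid.PushoutI (amalgamHom f₁ f₂) ≃* K ⋊[act] A)) ∧
    K ⊓ (Monoid.PushoutI.of (φ := amalgamHom f₁ f₂) true).range
      = Subgroup.map (Monoid.PushoutI.of (φ := amalgamHom f₁ f₂) true) N := by
  subst hK
  have hπ := hsemi.retraction_apply hf₂
  rw [← hsemi.ker_retraction hf₂, ← ker_amalgamRetraction f₁ hπ]
  have hsplit := amalgamRetraction_of_false f₁ hπ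
  exact ⟨inferInstance, MonoidHom.isComplement'_ker_range_of_leftInverse hsplit,
    MonoidHom.exists_mulEquiv_semidirectProduct_of_leftInverse hsplit,
    ker_amalgamRetraction_inf_range_of_true f₁ hπ⟩

/-- If `B = C ⋉ N` is an internal semidirect product, then `A *_C B ≅ A ⋉ K`, where `K`
is the normal closure of `N` in `A *_C B`; moreover `K ∩ B = N`. -/
theorem stmt_3 (A B : Type u) (C : Type*) [Group A] [Group B] [Group C]
    (f₁ : C →* A) (f₂ : C →* B)
    (hf₁ : Function.Injective f₁) (hf₂ : Function.Injective f₂)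
    (N : Subgroup B) (hN : N.Normal)
    (hsemi : Subgroup.IsComplement' f₂.range N)
    (K : Subgroup (Monoid.PushoutI (amalgamHom f₁ f₂)))
    (hK : K = Subgroup.normalClosure
        ((Monoid.PushoutI.of (φ := amalgamHom f₁ f₂) true) '' (N : Set B))) :
    K.Normal ∧
    Subgroup.IsComplement' K ((Monoid.PushoutI.of (φ := amalgamHom f₁ f₂) false).range) ∧
    (∃ act : A →* MulAut ↥K,
        Nonempty (Monoid.PushoutI (amalgamHom f₁ f₂) ≃* K ⋊[act] A)) ∧
    K ⊓ (Monoid.PushoutI.of (φ := amalgamHom f₁ f₂) true).range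
      = Subgroup.map (Monoid.PushoutI.of (φ := amalgamHom f₁ f₂) true) N :=
  stmt_3_general A B C f₁ f₂ hf₂ N hN hsemi K hK
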